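/- Under the level-one action of the affine Hecke algebra H_m on Q(q,t)[X_1^{±1},...,X_m^{±1}], for any subset I ⊆ {1,...,m} one has (∏_{i∈I} Y_i) • 1 = t^{|I|(|I|-1)/2} · ∏_{i∈I} X_i. Consequently, the map F(Y) ↦ F(Y)•1 sends the elementary symmetric polynomial e_r(Y_1,...,Y_m) to t^{r(r-1)/2}·e_r(X_1,...,X_m). -/

import Mathlib

set_option maxHeartbeats 1000000
set_option synthInstance.maxHeartbeats 400000

open MvPolynomial

/-- The field `ℚ(q,t)`, realized as the fraction field of `ℚ[q,t]`. -/
abbrev K2 := FractionRing (MvPolynomial (Fin 2) ℚ)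

/-- The parameter `q ∈ ℚ(q,t)`. -/
noncomputable def qq : K2 := algebraMap (MvPolynomial (Fin 2) ℚ) K2 (X 0)

/-- The parameter `t ∈ ℚ(q,t)`. -/
noncomputable def tt : K2 := algebraMap (MvPolynomial (Fin 2) ℚ) K2 (X 1)

/-- The polynomial ring `ℚ(q,t)[X₁,…,X_m]`. -/
abbrev Sqt (m : ℕ) := MvPolynomial (Fin m) K2

/-- The field `ℚ(q,t)(X₁,…,X_m)` in which the Laurent polynomial ring
`ℚ(q,t)[X₁^{±1},…,X_m^{±1}]` naturally embeds. -/
abbrev Lqt (m : ℕ) := FractionRing (Sqt m)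

noncomputable def emb (m : ℕ) : Sqt m →+* Lqt m := algebraMap (Sqt m) (Lqt m)

noncomputable def qL (m : ℕ) : Lqt m := emb m (C qq)

noncomputable def tL (m : ℕ) : Lqt m := emb m (C tt)

noncomputable def Xv (m : ℕ) (a : Fin m) : Lqt m := emb m (X a)

/-- The `ℤ`-indexed variables `X_j`, subject to the level-one convention
`X_{i+km} = q^{-k} X_i`; for `1 ≤ j ≤ m` this is the variable `X_j`. -/
noncomputable def Xz (m : ℕ) (hm : 0 < m) (j : ℤ) : Lqt m :=
  qL m ^ (-((j - 1) / (m : ℤ))) *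
    Xv m ⟨((j - 1) % (m : ℤ)).toNat, by
      have h0 : (0 : ℤ) < (m : ℤ) := by exact_mod_cast hm
      have h1 : 0 ≤ (j - 1) % (m : ℤ) := Int.emod_nonneg _ (ne_of_gt h0)
      have h2 : (j - 1) % (m : ℤ) < (m : ℤ) := Int.emod_lt_of_pos _ h0
      omega⟩

/-- The elementary symmetric polynomial `e_r(X_a, …, X_b)` (equal to `0` for
`r < 0`, and to `δ_{r,0}` when the interval `[a,b]` is empty). -/
noncomputable def esym (m : ℕ) (hm : 0 < m) (a b r : ℤ) : Lqt m :=
  if r < 0 then 0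
  else ∑ I ∈ (Finset.Icc a b).powersetCard r.toNat, ∏ j ∈ I, Xz m hm j

/-- The `t`-integer `[n]_t = 1 + t + ⋯ + t^{n-1}`. -/
noncomputable def tint (m : ℕ) (n : ℕ) : Lqt m := ∑ j ∈ Finset.range n, tL m ^ j

/-- The `t`-factorial `[n]_t!`. -/
noncomputable def tfact (m : ℕ) (n : ℕ) : Lqt m :=
  ∏ j ∈ Finset.range n, tint m (j + 1)

/-!
On a monomial `X_J = ∏_{j ∈ J} X_j` with `J ⊆ (i, m]` the operator `Y_i` acts triangularly.
Each of `T_i⁻¹, …, T_{m-1}⁻¹` either lowers a factor `X_{k+1}` of the monomial to `X_k`, or,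
when the monomial is symmetric in `X_k, X_{k+1}`, multiplies it by `t⁻¹`; then `Π` raises all
indices back and inserts `X_1`, which `T_1, …, T_{i-1}` carry to `X_i`. Counting powers of `t`
gives `Y_i (t^n X_J) = t^(n + |J|) X_i X_J`, so applying the `Y_i`, `i ∈ I`, in decreasing order
of `i` to `1` produces `t^(0 + 1 + ⋯ + (|I| - 1)) X_I`. Summing over `|I| = r` gives `e_r`.
-/

open Finset

section DemazureLusztig

variable {K : Type*} [Field K]

/-- The Demazure–Lusztig operator `T_i`, for `σ = s_i` and `w = X_i X_{i+1}⁻¹`. -/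
def demazureLusztig (σ : K ≃+* K) (t w F : K) : K :=
  t * σ F + (t - 1) * (F - σ F) / (1 - w)

/-- `t⁻¹ (T - (t - 1))`, which is `T⁻¹` for `T = demazureLusztig σ t w` by the quadratic
relation `(T - t) (T + 1) = 0`. -/
def demazureLusztigInv (σ : K ≃+* K) (t w F : K) : K :=
  σ F + (1 - t⁻¹) * (w * F - σ F) / (1 - w)

theorem demazureLusztigInv_of_fixed {σ : K ≃+* K} (t : K) {w G : K} (hw : w ≠ 1)
    (hG : σ G = G) : demazureLusztigInv σ t w G = t⁻¹ * G := by
  have : 1 - w ≠ 0 := sub_ne_zero.mpr hw.symm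
  rw [demazureLusztigInv, hG]
  field_simp
  ring

theorem demazureLusztigInv_mul_of_swap {σ : K ≃+* K} (t : K) {u v H : K} (hv : v ≠ 0)
    (hσv : σ v = u) (hH : σ H = H) :
    demazureLusztigInv σ t (u * v⁻¹) (v * H) = u * H := by
  rw [demazureLusztigInv, map_mul, hσv, hH, mul_assoc, inv_mul_cancel_left₀ hv, sub_self,
    mul_zero, zero_div, add_zero]

theorem demazureLusztig_mul_of_swap {σ : K ≃+* K} (t : K) {u v H : K} (hv : v ≠ 0)
    (huv : u ≠ v) (hσu : σ u = v) (hH : σ H = H) :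
    demazureLusztig σ t (u * v⁻¹) (u * H) = v * H := by
  have : v - u ≠ 0 := sub_ne_zero.mpr huv.symm
  rw [demazureLusztig, map_mul, hσu, hH]
  field_simp
  ring

end DemazureLusztig

section SwapAction

variable {K : Type*} [Field K] {m : ℕ} {σ : ℕ → K ≃+* K} {t : K} {x : ℕ → K}

structure IsSwapAction (m : ℕ) (σ : ℕ → K ≃+* K) (t : K) (x : ℕ → K) : Prop where
  ne_zero : ∀ j, 1 ≤ j → j ≤ m → x j ≠ 0
  injOn : Set.InjOn x (Set.Icc 1 m)
  map_t : ∀ i, 1 ≤ i → i < m → σ i t = t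
  map_x : ∀ i, 1 ≤ i → i < m → ∀ j, 1 ≤ j → j ≤ m →
    σ i (x j) = x (Equiv.swap i (i + 1) j)

namespace IsSwapAction

theorem map_x_self (hσ : IsSwapAction m σ t x) {i : ℕ} (hi : 1 ≤ i) (him : i < m) :
    σ i (x i) = x (i + 1) := by
  rw [hσ.map_x i hi him i hi him.le, Equiv.swap_apply_left]

theorem map_x_succ (hσ : IsSwapAction m σ t x) {i : ℕ} (hi : 1 ≤ i) (him : i < m) :
    σ i (x (i + 1)) = x i := by
  rw [hσ.map_x i hi him (i + 1) (by omega) him, Equiv.swap_apply_right]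

theorem map_x_of_ne (hσ : IsSwapAction m σ t x) {i j : ℕ} (hi : 1 ≤ i) (him : i < m)
    (hj : 1 ≤ j) (hjm : j ≤ m) (hji : j ≠ i) (hji' : j ≠ i + 1) : σ i (x j) = x j := by
  rw [hσ.map_x i hi him j hj hjm, Equiv.swap_apply_of_ne_of_ne hji hji']

theorem map_prod_of_notMem (hσ : IsSwapAction m σ t x) {i : ℕ} (hi : 1 ≤ i) (him : i < m)
    {J : Finset ℕ} (hJ : J ⊆ Icc 1 m) (hiJ : i ∉ J) (hiJ' : i + 1 ∉ J) :
    σ i (∏ j ∈ J, x j) = ∏ j ∈ J, x j := by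
  rw [map_prod]
  refine prod_congr rfl fun j hj => ?_
  have := mem_Icc.mp (hJ hj)
  exact hσ.map_x_of_ne hi him this.1 this.2 (ne_of_mem_of_not_mem hj hiJ)
    (ne_of_mem_of_not_mem hj hiJ')

theorem ratio_ne_one (hσ : IsSwapAction m σ t x) {i : ℕ} (hi : 1 ≤ i) (him : i < m) :
    x i * (x (i + 1))⁻¹ ≠ 1 := by
  rw [Ne, mul_inv_eq_one₀ (hσ.ne_zero (i + 1) (by omega) him)]
  intro h
  have := hσ.injOn (by simp; omega : i ∈ Set.Icc 1 m) (by simp; omega) h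
  omega

end IsSwapAction

end SwapAction

section CherednikOperators

variable {K : Type*} [Field K] {m : ℕ} {σ : ℕ → K ≃+* K} {t : K} {x : ℕ → K}

theorem chain_demazureLusztig_x_one_mul (hσ : IsSwapAction m σ t x) {T TC : ℕ → K → K}
    (hT : ∀ i F, T i F = demazureLusztig (σ i) t (x i * (x (i + 1))⁻¹) F)
    (hTC0 : ∀ F, TC 0 F = F) (hTCS : ∀ j F, TC (j + 1) F = T (j + 1) (TC j F))
    {l : ℕ} (hl : l < m) {G : K} (hG : ∀ k, 1 ≤ k → k ≤ l → σ k G = G) :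
    TC l (x 1 * G) = x (l + 1) * G := by
  induction l with
  | zero => exact hTC0 _
  | succ l ih =>
    rw [hTCS, ih (by omega) fun k hk hkl => hG k hk (by omega), hT]
    have hx := hσ.ratio_ne_one (i := l + 1) (by omega) hl
    exact demazureLusztig_mul_of_swap t (hσ.ne_zero _ (by omega) hl)
      (fun h => hx (by rw [h, mul_inv_cancel₀ (hσ.ne_zero _ (by omega) hl)]))
      (hσ.map_x_self (by omega) hl) (hG _ (by omega) le_rfl)

theorem chain_demazureLusztigInv_mul_prod (hσ : IsSwapAction m σ t x) {Tinv D : ℕ → K → K}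
    (hTinv : ∀ i F, Tinv i F = demazureLusztigInv (σ i) t (x i * (x (i + 1))⁻¹) F)
    (hDm : ∀ F, D m F = F) (hD : ∀ i, 1 ≤ i → i < m → ∀ F, D i F = D (i + 1) (Tinv i F))
    {i : ℕ} (hi : 1 ≤ i) (him : i ≤ m) {G : K} (hG : ∀ l, i ≤ l → l < m → σ l G = G)
    {J : Finset ℕ} (hJ : J ⊆ Icc (i + 1) m) :
    D i (G * ∏ j ∈ J, x j) = t⁻¹ ^ (m - i - #J) * G * ∏ j ∈ J, x (j - 1) := by
  induction hk : m - i generalizing i G J with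
  | zero =>
    obtain rfl : i = m := by omega
    obtain rfl : J = ∅ := subset_empty.mp (by simpa using hJ)
    simp [hDm]
  | succ k ih =>
    have him' : i < m := by omega
    have hJm : J ⊆ Icc 1 m := hJ.trans (Icc_subset_Icc_left (by omega))
    have hiJ : i ∉ J := fun h => by have := mem_Icc.mp (hJ h); omega
    have hGi : σ i G = G := hG i le_rfl him'
    rw [hD i hi him', hTinv]
    by_cases hmem : i + 1 ∈ J
    · have hJ' : J.erase (i + 1) ⊆ Icc (i + 1 + 1) m := fun j hj => by
        have := mem_Icc.mp (hJ (mem_of_mem_erase hj))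
        have := ne_of_mem_erase hj
        simp only [mem_Icc]; omega
      have hfix : σ i (G * ∏ j ∈ J.erase (i + 1), x j) =
          G * ∏ j ∈ J.erase (i + 1), x j := by
        rw [map_mul, hGi, hσ.map_prod_of_notMem hi him' ((erase_subset _ _).trans hJm)
          (fun h => hiJ (mem_of_mem_erase h)) (notMem_erase _ _)]
      have hxiG : ∀ l, i + 1 ≤ l → l < m → σ l (x i * G) = x i * G := fun l hl hlm => by
        rw [map_mul, hσ.map_x_of_ne (by omega) hlm hi him'.le (by omega) (by omega),
          hG l (by omega) hlm]
      rw [← mul_prod_erase J _ hmem, mul_left_comm,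
        demazureLusztigInv_mul_of_swap t (hσ.ne_zero _ (by omega) him')
          (hσ.map_x_succ hi him') hfix, ← mul_assoc,
        ih (by omega) (by omega) hxiG hJ' (by omega),
        ← mul_prod_erase J (fun j => x (j - 1)) hmem, card_erase_of_mem hmem,
        Nat.add_sub_cancel, show k - (#J - 1) = k + 1 - #J by
          have := card_pos.mpr ⟨_, hmem⟩; omega]
      ring
    · have hJ' : J ⊆ Icc (i + 1 + 1) m := fun j hj => by
        have := mem_Icc.mp (hJ hj)
        have : j ≠ i + 1 := ne_of_mem_of_not_mem hj hmem
        simp only [mem_Icc]; omega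
      have hcard : #J ≤ m - (i + 1) := by simpa using card_le_card hJ'
      have hfix : σ i (G * ∏ j ∈ J, x j) = G * ∏ j ∈ J, x j := by
        rw [map_mul, hGi, hσ.map_prod_of_notMem hi him' hJm hiJ hmem]
      have htG : ∀ l, i + 1 ≤ l → l < m → σ l (t⁻¹ * G) = t⁻¹ * G := by
        intro l hl hlm
        rw [map_mul, map_inv₀, hσ.map_t l (by omega) hlm, hG l (by omega) hlm]
      rw [demazureLusztigInv_of_fixed t (hσ.ratio_ne_one hi him') hfix, ← mul_assoc,
        ih (by omega) (by omega) htG hJ' (by omega),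
        show k + 1 - #J = k - #J + 1 by omega, pow_succ]
      ring

theorem cherednikY_pow_mul_prod (hσ : IsSwapAction m σ t x) (ht : t ≠ 0) {Φ : K →+* K}
    (hΦt : Φ t = t) (hΦx : ∀ j, 1 ≤ j → j < m → Φ (x j) = x (j + 1))
    {Pio : K → K} (hPio : ∀ F, Pio F = x 1 * Φ F) {T TC : ℕ → K → K}
    (hT : ∀ i F, T i F = demazureLusztig (σ i) t (x i * (x (i + 1))⁻¹) F)
    (hTC0 : ∀ F, TC 0 F = F) (hTCS : ∀ j F, TC (j + 1) F = T (j + 1) (TC j F))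
    {Tinv D : ℕ → K → K}
    (hTinv : ∀ i F, Tinv i F = demazureLusztigInv (σ i) t (x i * (x (i + 1))⁻¹) F)
    (hDm : ∀ F, D m F = F) (hD : ∀ i, 1 ≤ i → i < m → ∀ F, D i F = D (i + 1) (Tinv i F))
    {Y : ℕ → K → K}
    (hY : ∀ i, 1 ≤ i → i ≤ m → ∀ F, Y i F = t ^ (m - i) * TC (i - 1) (Pio (D i F)))
    {i : ℕ} (hi : 1 ≤ i) (him : i ≤ m) (n : ℕ) {J : Finset ℕ} (hJ : J ⊆ Icc (i + 1) m) :
    Y i (t ^ n * ∏ j ∈ J, x j) = t ^ (n + #J) * (x i * ∏ j ∈ J, x j) := by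
  have hcard : #J ≤ m - i := by simpa using card_le_card hJ
  have hΦJ : Φ (∏ j ∈ J, x (j - 1)) = ∏ j ∈ J, x j := by
    rw [map_prod]
    refine prod_congr rfl fun j hj => ?_
    have := mem_Icc.mp (hJ hj)
    rw [hΦx (j - 1) (by omega) (by omega), Nat.sub_add_cancel (by omega)]
  have hfix : ∀ k, 1 ≤ k → k ≤ i - 1 →
      σ k (t⁻¹ ^ (m - i - #J) * t ^ n * ∏ j ∈ J, x j) =
        t⁻¹ ^ (m - i - #J) * t ^ n * ∏ j ∈ J, x j := by
    intro k hk hki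
    rw [map_mul, map_mul, map_pow, map_pow, map_inv₀, hσ.map_t k hk (by omega),
      hσ.map_prod_of_notMem hk (by omega) (hJ.trans (Icc_subset_Icc_left (by omega)))
        (fun h => by have := mem_Icc.mp (hJ h); omega)
        (fun h => by have := mem_Icc.mp (hJ h); omega)]
  rw [hY i hi him, chain_demazureLusztigInv_mul_prod hσ hTinv hDm hD hi him
      (fun l hl hlm => by rw [map_pow, hσ.map_t l (by omega) hlm]) hJ,
    hPio, map_mul, map_mul, map_pow, map_pow, map_inv₀, hΦt, hΦJ,
    chain_demazureLusztig_x_one_mul hσ hT hTC0 hTCS (by omega) hfix, Nat.sub_add_cancel hi,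
    show m - i = m - i - #J + #J by omega, Nat.add_sub_cancel, pow_add, inv_pow]
  field_simp
  ring

theorem foldr_sort_eq_pow_mul_prod {Y : ℕ → K → K}
    (hY : ∀ i, 1 ≤ i → i ≤ m → ∀ n J, J ⊆ Icc (i + 1) m →
      Y i (t ^ n * ∏ j ∈ J, x j) = t ^ (n + #J) * (x i * ∏ j ∈ J, x j))
    {I : Finset ℕ} (hI : I ⊆ Icc 1 m) :
    (I.sort (· ≤ ·)).foldr Y 1 = t ^ (#I * (#I - 1) / 2) * ∏ i ∈ I, x i := by
  induction I using Finset.induction_on_min with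
  | empty => simp
  | insert a s has ih =>
    have ha := mem_Icc.mp (hI (mem_insert_self a s))
    have has' : a ∉ s := fun h => lt_irrefl a (has a h)
    have hs : s ⊆ Icc (a + 1) m := fun b hb => by
      have := mem_Icc.mp (hI (mem_insert_of_mem hb))
      have := has b hb
      simp only [mem_Icc]; omega
    rw [sort_insert _ (fun b hb => (has b hb).le) has', List.foldr_cons,
      ih ((subset_insert a s).trans hI), hY a ha.1 ha.2 _ s hs, card_insert_of_notMem has',
      Nat.triangle_succ, prod_insert has']

end CherednikOperators

section LevelOne

variable {m : ℕ} (hm : 0 < m)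

theorem Xz_natCast_succ {l : ℕ} (hl : l < m) :
    Xz m hm ((l + 1 : ℕ) : ℤ) = Xv m ⟨l, hl⟩ := by
  have hlm : ((l + 1 : ℕ) : ℤ) - 1 = l := by push_cast; ring
  simp only [Xz, hlm, Int.ediv_eq_zero_of_lt (Int.natCast_nonneg l) (by omega : (l : ℤ) < m),
    Int.emod_eq_of_lt (Int.natCast_nonneg l) (by omega : (l : ℤ) < m), Int.toNat_natCast,
    neg_zero, zpow_zero, one_mul]

theorem tL_ne_zero : tL m ≠ 0 := by
  have htt : tt ≠ 0 := (map_ne_zero_iff _ (IsFractionRing.injective _ K2)).mpr (X_ne_zero 1)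
  exact (map_ne_zero_iff _ (IsFractionRing.injective (Sqt m) (Lqt m))).mpr (C_ne_zero.mpr htt)

theorem isSwapAction_Xz (s : ℕ → (Lqt m ≃+* Lqt m))
    (hs : ∀ (a b : Fin m), (b : ℕ) = (a : ℕ) + 1 →
      ∀ p : Sqt m, s ((a : ℕ) + 1) (emb m p) = emb m (rename (Equiv.swap a b) p)) :
    IsSwapAction m s (tL m) (fun j : ℕ => Xz m hm j) where
  ne_zero j hj hjm := by
    obtain ⟨l, rfl⟩ : ∃ l, j = l + 1 := ⟨j - 1, by omega⟩
    rw [Xz_natCast_succ hm (by omega), Xv, emb,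
      map_ne_zero_iff _ (IsFractionRing.injective (Sqt m) (Lqt m))]
    exact X_ne_zero _
  injOn j hj k hk hjk := by
    simp only [Set.mem_Icc] at hj hk
    obtain ⟨j, rfl⟩ : ∃ l, j = l + 1 := ⟨j - 1, by omega⟩
    obtain ⟨k, rfl⟩ : ∃ l, k = l + 1 := ⟨k - 1, by omega⟩
    simp only [Xz_natCast_succ hm (Nat.lt_of_succ_le hj.2),
      Xz_natCast_succ hm (Nat.lt_of_succ_le hk.2), Xv] at hjk
    simpa using X_injective (IsFractionRing.injective (Sqt m) (Lqt m) hjk)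
  map_t i hi him := by
    obtain ⟨a, rfl⟩ : ∃ a, i = a + 1 := ⟨i - 1, by omega⟩
    rw [tL, hs ⟨a, by omega⟩ ⟨a + 1, him⟩ rfl, rename_C]
  map_x i hi him j hj hjm := by
    obtain ⟨a, rfl⟩ : ∃ a, i = a + 1 := ⟨i - 1, by omega⟩
    obtain ⟨b, rfl⟩ : ∃ b, j = b + 1 := ⟨j - 1, by omega⟩
    have hswap : Equiv.swap (a + 1) (a + 1 + 1) (b + 1)
        = (Equiv.swap (⟨a, by omega⟩ : Fin m) ⟨a + 1, him⟩ ⟨b, hjm⟩ : ℕ) + 1 := by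
      simp only [Equiv.swap_apply_def, Fin.ext_iff]
      split_ifs <;> simp only at * <;> omega
    simp only [hswap, Xz_natCast_succ hm (Fin.isLt _), Xz_natCast_succ hm hjm, Xv]
    rw [hs ⟨a, by omega⟩ ⟨a + 1, him⟩ rfl, rename_X]

/-- `Φ` acts on polynomials as `F ↦ F(X_2, …, X_m, q⁻¹ X_1)`. -/
def IsLevelOneShift (Φ : Lqt m →+* Lqt m) : Prop :=
  ∀ p : Sqt m, Φ (emb m p) = emb m (aeval
    (fun a : Fin m => if h : (a : ℕ) + 1 < m then (X ⟨(a : ℕ) + 1, h⟩ : Sqt m)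
      else C qq⁻¹ * X ⟨0, hm⟩) p)

theorem IsLevelOneShift.map_tL {Φ : Lqt m →+* Lqt m} (hΦ : IsLevelOneShift hm Φ) :
    Φ (tL m) = tL m := by
  rw [tL, hΦ, aeval_C]
  rfl

theorem IsLevelOneShift.map_Xz {Φ : Lqt m →+* Lqt m} (hΦ : IsLevelOneShift hm Φ) {j : ℕ}
    (hj : 1 ≤ j) (hjm : j < m) : Φ (Xz m hm j) = Xz m hm ((j + 1 : ℕ) : ℤ) := by
  obtain ⟨l, rfl⟩ : ∃ l, j = l + 1 := ⟨j - 1, by omega⟩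
  rw [Xz_natCast_succ hm (by omega), Xz_natCast_succ hm hjm, Xv, Xv, hΦ, aeval_X, dif_pos hjm]

theorem map_castEmbedding_Icc (a b : ℕ) : (Icc a b).map Nat.castEmbedding = Icc (a : ℤ) b := by
  ext z
  simp only [mem_map, mem_Icc, Nat.castEmbedding_apply]
  constructor
  · rintro ⟨n, hn, rfl⟩
    omega
  · intro hz
    exact ⟨z.toNat, by omega, by omega⟩

theorem esym_one_natCast (r : ℕ) :
    esym m hm 1 m r = ∑ I ∈ (Icc 1 m).powersetCard r, ∏ i ∈ I, Xz m hm i := by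
  rw [esym, if_neg (by omega), Int.toNat_natCast, ← Nat.cast_one, ← map_castEmbedding_Icc,
    powersetCard_map, sum_map]
  simp only [RelEmbedding.coe_toEmbedding, mapEmbedding_apply, prod_map, Nat.castEmbedding_apply]

end LevelOne

theorem stmt_14_general (m : ℕ) (hm : 0 < m)
    (s : ℕ → (Lqt m ≃+* Lqt m))
    (hs : ∀ (a b : Fin m), (b : ℕ) = (a : ℕ) + 1 →
      ∀ p : Sqt m, s ((a : ℕ) + 1) (emb m p) = emb m (rename (Equiv.swap a b) p))
    (Φ : Lqt m →+* Lqt m)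
    (hΦ : ∀ p : Sqt m, Φ (emb m p) = emb m (aeval
      (fun a : Fin m => if h : (a : ℕ) + 1 < m then (X ⟨(a : ℕ) + 1, h⟩ : Sqt m)
        else C qq⁻¹ * X ⟨0, hm⟩) p))
    (Tinv : ℕ → Lqt m → Lqt m)
    (hTinv : ∀ (i : ℕ) (F : Lqt m), Tinv i F = s i F + (1 - (tL m)⁻¹) *
      (Xz m hm i * (Xz m hm (i + 1))⁻¹ * F - s i F) /
        (1 - Xz m hm i * (Xz m hm (i + 1))⁻¹))
    (Pio : Lqt m → Lqt m) (hPio : ∀ F, Pio F = Xz m hm 1 * Φ F)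
    (T : ℕ → Lqt m → Lqt m)
    (hT : ∀ (i : ℕ) (F : Lqt m), T i F = tL m * s i F + (tL m - 1) *
      (F - s i F) / (1 - Xz m hm i * (Xz m hm (i + 1))⁻¹))
    (TC : ℕ → Lqt m → Lqt m) (hTC0 : ∀ F, TC 0 F = F)
    (hTCS : ∀ (j : ℕ) (F : Lqt m), TC (j + 1) F = T (j + 1) (TC j F))
    (D : ℕ → Lqt m → Lqt m) (hDm : ∀ F, D m F = F)
    (hD : ∀ i : ℕ, 1 ≤ i → i < m → ∀ F, D i F = D (i + 1) (Tinv i F))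
    (Y : ℕ → Lqt m → Lqt m)
    (hY : ∀ i : ℕ, 1 ≤ i → i ≤ m → ∀ F,
      Y i F = tL m ^ (m - i) * TC (i - 1) (Pio (D i F)))
    :
    (∀ I : Finset ℕ, I ⊆ Finset.Icc 1 m →
      (I.sort (· ≤ ·)).foldr (fun i G => Y i G) 1 =
        tL m ^ (I.card * (I.card - 1) / 2) * ∏ i ∈ I, Xz m hm i) ∧
    (∀ r : ℕ,
      (∑ I ∈ (Finset.Icc 1 m).powersetCard r,
        (I.sort (· ≤ ·)).foldr (fun i G => Y i G) 1) =
      tL m ^ (r * (r - 1) / 2) * esym m hm 1 m r) := by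
  have hY_monomial : ∀ i, 1 ≤ i → i ≤ m → ∀ n (J : Finset ℕ), J ⊆ Icc (i + 1) m →
      Y i (tL m ^ n * ∏ j ∈ J, Xz m hm j) =
        tL m ^ (n + #J) * (Xz m hm i * ∏ j ∈ J, Xz m hm j) :=
    fun i hi him n J hJ => cherednikY_pow_mul_prod (isSwapAction_Xz hm s hs) tL_ne_zero
      (IsLevelOneShift.map_tL hm hΦ) (fun j hj hjm => IsLevelOneShift.map_Xz hm hΦ hj hjm)
      hPio hT hTC0 hTCS hTinv hDm hD hY hi him n hJ
  have hprod : ∀ I : Finset ℕ, I ⊆ Icc 1 m → (I.sort (· ≤ ·)).foldr Y 1 =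
      tL m ^ (#I * (#I - 1) / 2) * ∏ i ∈ I, Xz m hm i := fun I hI =>
    foldr_sort_eq_pow_mul_prod hY_monomial hI
  refine ⟨hprod, fun r => ?_⟩
  rw [esym_one_natCast, mul_sum]
  refine sum_congr rfl fun I hI => ?_
  obtain ⟨hIm, rfl⟩ := mem_powersetCard.mp hI
  exact hprod I hIm

/-- under the level-one action of the affine Hecke algebra,
`(∏_{i ∈ I} Y_i) • 1 = t^{|I|(|I|-1)/2} ∏_{i ∈ I} X_i` for every subset
`I ⊆ {1,…,m}`, where `Y_i = t^{m-i} T_{i-1}⋯T_1 Π T_{m-1}⁻¹⋯T_i⁻¹`;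
consequently `e_r(Y_1,…,Y_m) • 1 = t^{r(r-1)/2} e_r(X_1,…,X_m)`. -/
theorem stmt_14 (m : ℕ) (hm : 0 < m)
    (s : ℕ → (Lqt m ≃+* Lqt m))
    (hs : ∀ (a b : Fin m), (b : ℕ) = (a : ℕ) + 1 →
      ∀ p : Sqt m, s ((a : ℕ) + 1) (emb m p) = emb m (rename (Equiv.swap a b) p))
    (Φ : Lqt m →+* Lqt m)
    (hΦ : ∀ p : Sqt m, Φ (emb m p) = emb m (aeval
      (fun a : Fin m => if h : (a : ℕ) + 1 < m then (X ⟨(a : ℕ) + 1, h⟩ : Sqt m)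
        else C qq⁻¹ * X ⟨0, hm⟩) p))
    (Tinv : ℕ → Lqt m → Lqt m)
    (hTinv : ∀ (i : ℕ) (F : Lqt m), Tinv i F = s i F + (1 - (tL m)⁻¹) *
      (Xz m hm i * (Xz m hm (i + 1))⁻¹ * F - s i F) /
        (1 - Xz m hm i * (Xz m hm (i + 1))⁻¹))
    (Pio : Lqt m → Lqt m) (hPio : ∀ F, Pio F = Xz m hm 1 * Φ F)
    (Ch : ℕ → Lqt m → Lqt m) (hCh0 : ∀ F, Ch 0 F = F)
    (hChS : ∀ (j : ℕ) (F : Lqt m), Ch (j + 1) F = Tinv (j + 1) (Ch j F))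
    (Sh : ℤ → Lqt m → Lqt m)
    (hShneg : ∀ a : ℤ, a < 0 → ∀ F, Sh a F = 0)
    (hSh : ∀ (a : ℕ) (F : Lqt m), Sh a F = ∑ j ∈ Finset.range (a + 1), Ch j (Pio F))
    (T : ℕ → Lqt m → Lqt m)
    (hT : ∀ (i : ℕ) (F : Lqt m), T i F = tL m * s i F + (tL m - 1) *
      (F - s i F) / (1 - Xz m hm i * (Xz m hm (i + 1))⁻¹))
    (TC : ℕ → Lqt m → Lqt m) (hTC0 : ∀ F, TC 0 F = F)
    (hTCS : ∀ (j : ℕ) (F : Lqt m), TC (j + 1) F = T (j + 1) (TC j F))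
    (D : ℕ → Lqt m → Lqt m) (hDm : ∀ F, D m F = F)
    (hD : ∀ i : ℕ, 1 ≤ i → i < m → ∀ F, D i F = D (i + 1) (Tinv i F))
    (Y : ℕ → Lqt m → Lqt m)
    (hY : ∀ i : ℕ, 1 ≤ i → i ≤ m → ∀ F,
      Y i F = tL m ^ (m - i) * TC (i - 1) (Pio (D i F)))
    :
    (∀ I : Finset ℕ, I ⊆ Finset.Icc 1 m →
      (I.sort (· ≤ ·)).foldr (fun i G => Y i G) 1 =
        tL m ^ (I.card * (I.card - 1) / 2) * ∏ i ∈ I, Xz m hm i) ∧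
    (∀ r : ℕ,
      (∑ I ∈ (Finset.Icc 1 m).powersetCard r,
        (I.sort (· ≤ ·)).foldr (fun i G => Y i G) 1) =
      tL m ^ (r * (r - 1) / 2) * esym m hm 1 m r) :=
  stmt_14_general m hm s hs Φ hΦ Tinv hTinv Pio hPio T hT TC hTC0 hTCS D hDm hD Y hY
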